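/- Let L be a Lie algebra over a commutative ring R, finitely generated free as an R-module, and let a ∈ R be a non-zero-divisor. If the kernel of the bracket map ⋀² L → L equals the submodule generated by decomposable elements x∧y with [x,y]=0, then the same holds for the Lie subalgebra aL = {ax : x ∈ L}. -/

import Mathlib

open ExteriorAlgebra

/-- The wedge `x ∧ y` as an element of the exterior square `⋀[R]^2 M`. -/
noncomputable def wedge2 (R : Type*) {M : Type*} [CommRing R] [AddCommGroup M] [Module R M]
    (x y : M) : ⋀[R]^2 M :=
  ⟨ExteriorAlgebra.ιMulti R 2 ![x, y],
    ExteriorAlgebra.ιMulti_range R 2 (Set.mem_range_self _)⟩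

/-- The submodule `⋀L ⊆ ⋀²L` generated by the decomposable elements `x∧y` with `⁅x,y⁆ = 0`. -/
noncomputable def wedgeDecomp (R L : Type*) [CommRing R] [LieRing L] [LieAlgebra R L] :
    Submodule R (⋀[R]^2 L) :=
  Submodule.span R {w | ∃ x y : L, ⁅x, y⁆ = 0 ∧ w = wedge2 R x y}

/-! Multiplication by `a` is a linear bijection `e : L → aL` (injective because `a` is regular on
the free module `L`) with `⁅e x, e y⁆ = e (a • ⁅x, y⁆)`. Hence the bracket of `aL` composed with
`⋀²e` is the bracket of `L` followed by the injective map `x ↦ e (a • x)`, so the surjection `⋀²e`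
maps the kernel for `L` onto the kernel for `aL`, and it maps `⋀L` into `⋀(aL)`. -/

section
variable {R M N : Type*} [CommRing R] [AddCommGroup M] [Module R M] [AddCommGroup N] [Module R N]

lemma wedge2_eq_ιMulti (x y : M) : wedge2 R x y = exteriorPower.ιMulti R 2 ![x, y] := rfl

lemma exteriorPower.map_wedge2 (f : M →ₗ[R] N) (x y : M) :
    exteriorPower.map 2 f (wedge2 R x y) = wedge2 R (f x) (f y) := by
  rw [wedge2_eq_ιMulti, wedge2_eq_ιMulti, exteriorPower.map_apply_ιMulti]
  congr 1
  ext i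
  fin_cases i <;> rfl

@[ext]
lemma exteriorPower.linearMap_ext_wedge2 {f g : ⋀[R]^2 M →ₗ[R] N}
    (h : ∀ x y : M, f (wedge2 R x y) = g (wedge2 R x y)) : f = g := by
  refine LinearMap.ext_on_range (exteriorPower.ιMulti_span R 2 M) fun m => ?_
  have hm : ![m 0, m 1] = m := by ext i; fin_cases i <;> rfl
  simpa only [wedge2_eq_ιMulti, hm] using h (m 0) (m 1)

end

section
variable {R L L' : Type*} [CommRing R] [LieRing L] [LieAlgebra R L] [LieRing L'] [LieAlgebra R L']

lemma wedgeDecomp_le_ker {β : ⋀[R]^2 L →ₗ[R] L} (hβ : ∀ x y : L, β (wedge2 R x y) = ⁅x, y⁆) :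
    wedgeDecomp R L ≤ LinearMap.ker β := by
  rw [wedgeDecomp, Submodule.span_le]
  rintro _ ⟨x, y, hxy, rfl⟩
  rw [SetLike.mem_coe, LinearMap.mem_ker, hβ, hxy]

lemma map_wedgeDecomp_le {e : L →ₗ[R] L'} (he : ∀ x y : L, ⁅x, y⁆ = 0 → ⁅e x, e y⁆ = 0) :
    (wedgeDecomp R L).map (exteriorPower.map 2 e) ≤ wedgeDecomp R L' := by
  rw [wedgeDecomp, Submodule.map_span_le]
  rintro _ ⟨x, y, hxy, rfl⟩
  rw [exteriorPower.map_wedge2]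
  exact Submodule.subset_span ⟨e x, e y, he x y hxy, rfl⟩

theorem ker_eq_wedgeDecomp_of_surjective {e φ : L →ₗ[R] L'} (he : Function.Surjective e)
    (hφ : Function.Injective φ) (hbr : ∀ x y : L, ⁅e x, e y⁆ = φ ⁅x, y⁆)
    {β : ⋀[R]^2 L →ₗ[R] L} (hβ : ∀ x y : L, β (wedge2 R x y) = ⁅x, y⁆)
    (hker : LinearMap.ker β = wedgeDecomp R L)
    {β' : ⋀[R]^2 L' →ₗ[R] L'} (hβ' : ∀ x y : L', β' (wedge2 R x y) = ⁅x, y⁆) :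
    LinearMap.ker β' = wedgeDecomp R L' := by
  have hcomp : β' ∘ₗ exteriorPower.map 2 e = φ ∘ₗ β := by
    ext x y
    simp only [LinearMap.comp_apply, exteriorPower.map_wedge2, hβ, hβ', hbr]
  refine le_antisymm (fun w hw => ?_) (wedgeDecomp_le_ker hβ')
  obtain ⟨v, rfl⟩ := exteriorPower.map_surjective he w
  have hv : v ∈ LinearMap.ker β := by
    rw [LinearMap.mem_ker, ← hφ.eq_iff, ← LinearMap.comp_apply, ← hcomp, map_zero]
    exact hw
  refine map_wedgeDecomp_le (fun x y hxy => ?_) (Submodule.mem_map_of_mem (hker ▸ hv))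
  rw [hbr, hxy, map_zero]

end

theorem stmt2_general (R : Type*) [CommRing R] (L : Type*) [LieRing L] [LieAlgebra R L]
    [Module.Free R L]
    (a : R) (ha : a ∈ nonZeroDivisors R)
    (βL : (⋀[R]^2 L) →ₗ[R] L) (hβL : ∀ x y : L, βL (wedge2 R x y) = ⁅x, y⁆)
    (hL : LinearMap.ker βL = wedgeDecomp R L)
    (A : LieSubalgebra R L) (hA : ∀ x : L, x ∈ A ↔ ∃ y : L, x = a • y)
    (βA : (⋀[R]^2 A) →ₗ[R] A) (hβA : ∀ x y : A, βA (wedge2 R x y) = ⁅x, y⁆) :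
    LinearMap.ker βA = wedgeDecomp R A := by
  have hreg : IsSMulRegular L a := Module.Flat.isSMulRegular_of_nonZeroDivisors ha
  let e : L →ₗ[R] A := (a • LinearMap.id).codRestrict A.toSubmodule fun x => (hA _).2 ⟨x, rfl⟩
  have he_inj : Function.Injective e := fun x y hxy => hreg (congrArg Subtype.val hxy)
  have he_surj : Function.Surjective e := fun x => by
    obtain ⟨y, hy⟩ := (hA x).1 x.2
    exact ⟨y, Subtype.ext hy.symm⟩
  refine ker_eq_wedgeDecomp_of_surjective (φ := e ∘ₗ (a • LinearMap.id)) he_surj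
    (he_inj.comp (f := (a • ·)) hreg) (fun x y => Subtype.ext ?_) hβL hL hβA
  change ⁅a • x, a • y⁆ = a • a • ⁅x, y⁆
  rw [smul_lie, lie_smul]

/-- Let `L` be a Lie algebra over a commutative ring `R`, finitely generated free as an
`R`-module, and let `a ∈ R` be a non-zero-divisor.  If the kernel of the bracket map
`⋀² L → L` equals the submodule generated by decomposable elements `x∧y` with `⁅x,y⁆ = 0`,
then the same holds for the Lie subalgebra `aL = {a • x : x ∈ L}`. -/
theorem stmt2 (R : Type*) [CommRing R] (L : Type*) [LieRing L] [LieAlgebra R L]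
    [Module.Free R L] [Module.Finite R L]
    (a : R) (ha : a ∈ nonZeroDivisors R)
    (βL : (⋀[R]^2 L) →ₗ[R] L) (hβL : ∀ x y : L, βL (wedge2 R x y) = ⁅x, y⁆)
    (hL : LinearMap.ker βL = wedgeDecomp R L)
    (A : LieSubalgebra R L) (hA : ∀ x : L, x ∈ A ↔ ∃ y : L, x = a • y)
    (βA : (⋀[R]^2 A) →ₗ[R] A) (hβA : ∀ x y : A, βA (wedge2 R x y) = ⁅x, y⁆) :
    LinearMap.ker βA = wedgeDecomp R A :=
  stmt2_general R L a ha βL hβL hL A hA βA hβA
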